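/- The Pair Extension Theorem: Let L be a set of formulas containing all {∧,∨,⊃}-tautology instances, closed under modus ponens. Say Γ ⊢_L Δ iff there exist finite Γ' ⊆ Γ and Δ' ⊆ Δ with (⋀Γ' ⊃ ⋁Δ') ∈ L (with ⋀∅ = ⊤, ⋁∅ = ⊥). If Γ ⊬_L Δ, then there is a set Σ ⊇ Γ disjoint from Δ such that Σ contains L, Σ is closed under L-provable implications, Σ is prime (φ ∨ ψ ∈ Σ implies φ ∈ Σ or ψ ∈ Σ), and Σ is not the set of all formulas. -/

import Mathlib

/-- Formulas over countably many propositional variables (∼, ∧, ∨, ⊃,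
and group modalities indexed by sets of agents from a countable set). -/
inductive Fm : Type
  | var : ℕ → Fm
  | snot : Fm → Fm
  | and : Fm → Fm → Fm
  | or : Fm → Fm → Fm
  | imp : Fm → Fm → Fm
  | K : Finset ℕ → Fm → Fm
  | Ks : Finset ℕ → Fm → Fm

/-- Purely propositional {∧,∨,⊃}-formulas, used to express classical tautologies. -/
inductive PFm : Type
  | var : ℕ → PFm
  | and : PFm → PFm → PFm
  | or : PFm → PFm → PFm
  | imp : PFm → PFm → PFm

def peval (f : ℕ → Prop) : PFm → Prop
  | .var n => f n
  | .and p q => peval f p ∧ peval f q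
  | .or p q => peval f p ∨ peval f q
  | .imp p q => peval f p → peval f q

def psubst (σ : ℕ → Fm) : PFm → Fm
  | .var n => σ n
  | .and p q => Fm.and (psubst σ p) (psubst σ q)
  | .or p q => Fm.or (psubst σ p) (psubst σ q)
  | .imp p q => Fm.imp (psubst σ p) (psubst σ q)

/-- ⊤ := p ⊃ p for a fixed variable p. -/
def FTop : Fm := Fm.imp (Fm.var 0) (Fm.var 0)

/-- ⊥ := ∼⊤. -/
def FBot : Fm := Fm.snot FTop

/-- ⋀ of a finite list, with ⋀∅ = ⊤. -/
def conjL : List Fm → Fm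
  | [] => FTop
  | φ :: l => Fm.and φ (conjL l)

/-- ⋁ of a finite list, with ⋁∅ = ⊥. -/
def disjL : List Fm → Fm
  | [] => FBot
  | φ :: l => Fm.or φ (disjL l)

/-- `Γ ⊢_L Δ`: there are finite Γ' ⊆ Γ and Δ' ⊆ Δ with (⋀Γ' ⊃ ⋁Δ') ∈ L. -/
def Deriv (L Γ Δ : Set Fm) : Prop :=
  ∃ (l₁ l₂ : List Fm), (∀ φ ∈ l₁, φ ∈ Γ) ∧ (∀ φ ∈ l₂, φ ∈ Δ) ∧
    Fm.imp (conjL l₁) (disjL l₂) ∈ L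


-- ===== auxiliary development =====
deriving instance DecidableEq for Fm

namespace PairExtAux

/-- Injective coding of formulas into ℕ. -/
def enc : Fm → ℕ
  | .var n => Nat.pair 0 n
  | .snot φ => Nat.pair 1 (enc φ)
  | .and φ ψ => Nat.pair 2 (Nat.pair (enc φ) (enc ψ))
  | .or φ ψ => Nat.pair 3 (Nat.pair (enc φ) (enc ψ))
  | .imp φ ψ => Nat.pair 4 (Nat.pair (enc φ) (enc ψ))
  | .K s φ => Nat.pair 5 (Nat.pair (Encodable.encode s) (enc φ))
  | .Ks s φ => Nat.pair 6 (Nat.pair (Encodable.encode s) (enc φ))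

theorem enc_inj : ∀ x y : Fm, enc x = enc y → x = y := by
  intro x
  induction x with
  | var n => intro y h; cases y <;> simp [enc, Nat.pair_eq_pair] at h; rw [h]
  | snot φ ih =>
      intro y h; cases y <;> simp [enc, Nat.pair_eq_pair] at h
      rw [ih _ h]
  | and φ ψ ih1 ih2 =>
      intro y h; cases y <;> simp [enc, Nat.pair_eq_pair] at h
      rw [ih1 _ h.1, ih2 _ h.2]
  | or φ ψ ih1 ih2 =>
      intro y h; cases y <;> simp [enc, Nat.pair_eq_pair] at h
      rw [ih1 _ h.1, ih2 _ h.2]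
  | imp φ ψ ih1 ih2 =>
      intro y h; cases y <;> simp [enc, Nat.pair_eq_pair] at h
      rw [ih1 _ h.1, ih2 _ h.2]
  | K s φ ih =>
      intro y h; cases y <;> simp [enc, Nat.pair_eq_pair] at h
      rw [h.1, ih _ h.2]
  | Ks s φ ih =>
      intro y h; cases y <;> simp [enc, Nat.pair_eq_pair] at h
      rw [h.1, ih _ h.2]

instance : Countable Fm := ⟨enc, fun a b => enc_inj a b⟩
instance : Nonempty Fm := ⟨.var 0⟩

end PairExtAux

namespace PairExtAux

def pconj (ix : Fm → ℕ) (t : ℕ) : List Fm → PFm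
  | [] => .imp (.var t) (.var t)
  | ψ :: l => .and (.var (ix ψ)) (pconj ix t l)

def pdisj (ix : Fm → ℕ) (b : ℕ) : List Fm → PFm
  | [] => .var b
  | ψ :: l => .or (.var (ix ψ)) (pdisj ix b l)

theorem psubst_pconj (σ : ℕ → Fm) (ix : Fm → ℕ) (t : ℕ) (ht : σ t = Fm.var 0)
    (l : List Fm) (h : ∀ ψ ∈ l, σ (ix ψ) = ψ) : psubst σ (pconj ix t l) = conjL l := by
  induction l with
  | nil => simp [pconj, psubst, conjL, FTop, ht]
  | cons ψ l ih =>
      simp only [pconj, psubst, conjL, h ψ (by simp)]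
      rw [ih (fun χ hχ => h χ (by simp [hχ]))]

theorem psubst_pdisj (σ : ℕ → Fm) (ix : Fm → ℕ) (b : ℕ) (hb : σ b = FBot)
    (l : List Fm) (h : ∀ ψ ∈ l, σ (ix ψ) = ψ) : psubst σ (pdisj ix b l) = disjL l := by
  induction l with
  | nil => simp [pdisj, psubst, disjL, hb]
  | cons ψ l ih =>
      simp only [pdisj, psubst, disjL, h ψ (by simp)]
      rw [ih (fun χ hχ => h χ (by simp [hχ]))]

theorem peval_pconj (f : ℕ → Prop) (ix : Fm → ℕ) (t : ℕ) (l : List Fm) :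
    peval f (pconj ix t l) ↔ ∀ ψ ∈ l, f (ix ψ) := by
  induction l with
  | nil => simp [pconj, peval]
  | cons ψ l ih => simp [pconj, peval, ih]

theorem peval_pdisj (f : ℕ → Prop) (ix : Fm → ℕ) (b : ℕ) (l : List Fm) :
    peval f (pdisj ix b l) ↔ (∃ ψ ∈ l, f (ix ψ)) ∨ f b := by
  induction l with
  | nil => simp [pdisj, peval]
  | cons ψ l ih => simp [pdisj, peval, ih, List.exists_mem_cons_iff, or_assoc]

theorem sigma_ix (all : List Fm) {ψ : Fm} (h : ψ ∈ all) :
    all.getD (all.idxOf ψ) (Fm.var 0) = ψ := by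
  rw [List.getD_eq_getElem?_getD, List.getElem?_idxOf h]; rfl

/-- Zero-premise version: a valid sequent is in `L`. -/
theorem mem_L_of_valid₀ (L : Set Fm)
    (htaut : ∀ (p : PFm) (σ : ℕ → Fm), (∀ f : ℕ → Prop, peval f p) → psubst σ p ∈ L)
    (a b : List Fm)
    (hv : ∀ v : Fm → Prop, (∀ ψ ∈ a, v ψ) → (∃ ψ ∈ b, v ψ) ∨ v FBot) :
    Fm.imp (conjL a) (disjL b) ∈ L := by
  classical
  set all : List Fm := Fm.var 0 :: FBot :: (a ++ b) with hall
  set ix : Fm → ℕ := fun ψ => all.idxOf ψ with hix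
  set σ : ℕ → Fm := fun n => all.getD n (Fm.var 0) with hσdef
  have hσ : ∀ ψ ∈ all, σ (ix ψ) = ψ := fun ψ hψ => sigma_ix all hψ
  have ht : σ (ix (Fm.var 0)) = Fm.var 0 := hσ _ (by simp [hall])
  have hb : σ (ix FBot) = FBot := hσ _ (by simp [hall])
  have hmem := htaut (.imp (pconj ix (ix (Fm.var 0)) a) (pdisj ix (ix FBot) b)) σ
    (fun f => by
      simp only [peval, peval_pconj, peval_pdisj]
      exact hv (fun ψ => f (ix ψ)))
  rwa [show psubst σ (PFm.imp (pconj ix (ix (Fm.var 0)) a) (pdisj ix (ix FBot) b))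
      = Fm.imp (conjL a) (disjL b) from by
    simp only [psubst]
    rw [psubst_pconj σ ix _ ht a (fun ψ h => hσ ψ (by simp [hall, h])),
      psubst_pdisj σ ix _ hb b (fun ψ h => hσ ψ (by simp [hall, h]))]] at hmem

/-- Two-premise version. -/
theorem mem_L_of_valid₂ (L : Set Fm)
    (htaut : ∀ (p : PFm) (σ : ℕ → Fm), (∀ f : ℕ → Prop, peval f p) → psubst σ p ∈ L)
    (hmp : ∀ φ ψ : Fm, φ ∈ L → Fm.imp φ ψ ∈ L → ψ ∈ L)
    (a₁ b₁ a₂ b₂ a₃ b₃ : List Fm)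
    (h1 : Fm.imp (conjL a₁) (disjL b₁) ∈ L)
    (h2 : Fm.imp (conjL a₂) (disjL b₂) ∈ L)
    (hv : ∀ v : Fm → Prop,
      ((∀ ψ ∈ a₁, v ψ) → (∃ ψ ∈ b₁, v ψ) ∨ v FBot) →
      ((∀ ψ ∈ a₂, v ψ) → (∃ ψ ∈ b₂, v ψ) ∨ v FBot) →
      ((∀ ψ ∈ a₃, v ψ) → (∃ ψ ∈ b₃, v ψ) ∨ v FBot)) :
    Fm.imp (conjL a₃) (disjL b₃) ∈ L := by
  classical
  set all : List Fm := Fm.var 0 :: FBot :: (a₁ ++ b₁ ++ a₂ ++ b₂ ++ a₃ ++ b₃) with hall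
  set ix : Fm → ℕ := fun ψ => all.idxOf ψ with hix
  set σ : ℕ → Fm := fun n => all.getD n (Fm.var 0) with hσdef
  have hσ : ∀ ψ ∈ all, σ (ix ψ) = ψ := fun ψ hψ => sigma_ix all hψ
  have ht : σ (ix (Fm.var 0)) = Fm.var 0 := hσ _ (by simp [hall])
  have hb : σ (ix FBot) = FBot := hσ _ (by simp [hall])
  set t := ix (Fm.var 0)
  set b := ix FBot
  have hsub : ∀ (x y : List Fm), (∀ ψ ∈ x, ψ ∈ all) → (∀ ψ ∈ y, ψ ∈ all) →
      psubst σ (PFm.imp (pconj ix t x) (pdisj ix b y)) = Fm.imp (conjL x) (disjL y) := by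
    intro x y hx hy
    simp only [psubst]
    rw [psubst_pconj σ ix _ ht x (fun ψ h => hσ ψ (hx ψ h)),
      psubst_pdisj σ ix _ hb y (fun ψ h => hσ ψ (hy ψ h))]
  have hmem := htaut (.imp (.imp (pconj ix t a₁) (pdisj ix b b₁))
      (.imp (.imp (pconj ix t a₂) (pdisj ix b b₂)) (.imp (pconj ix t a₃) (pdisj ix b b₃)))) σ
    (fun f => by
      simp only [peval, peval_pconj, peval_pdisj]
      exact hv (fun ψ => f (ix ψ)))
  simp only [psubst] at hmem
  rw [psubst_pconj σ ix t ht a₁ (fun ψ h => hσ ψ (by simp [hall, h])),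
    psubst_pdisj σ ix b hb b₁ (fun ψ h => hσ ψ (by simp [hall, h])),
    psubst_pconj σ ix t ht a₂ (fun ψ h => hσ ψ (by simp [hall, h])),
    psubst_pdisj σ ix b hb b₂ (fun ψ h => hσ ψ (by simp [hall, h])),
    psubst_pconj σ ix t ht a₃ (fun ψ h => hσ ψ (by simp [hall, h])),
    psubst_pdisj σ ix b hb b₃ (fun ψ h => hσ ψ (by simp [hall, h]))] at hmem
  exact hmp _ _ h2 (hmp _ _ h1 hmem)

end PairExtAux

namespace PairExtAux

theorem cut (L : Set Fm)
    (htaut : ∀ (p : PFm) (σ : ℕ → Fm), (∀ f : ℕ → Prop, peval f p) → psubst σ p ∈ L)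
    (hmp : ∀ φ ψ : Fm, φ ∈ L → Fm.imp φ ψ ∈ L → ψ ∈ L)
    {φ : Fm} {G D : Set Fm}
    (h1 : Deriv L (insert φ G) D) (h2 : Deriv L G (insert φ D)) : Deriv L G D := by
  classical
  obtain ⟨a₁, b₁, ha₁, hb₁, hL1⟩ := h1
  obtain ⟨a₂, b₂, ha₂, hb₂, hL2⟩ := h2
  refine ⟨a₂ ++ a₁.filter (fun ψ => ψ ≠ φ), b₁ ++ b₂.filter (fun ψ => ψ ≠ φ), ?_, ?_, ?_⟩
  · intro ψ hψ
    rcases List.mem_append.mp hψ with h | h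
    · exact ha₂ ψ h
    · have := List.mem_filter.mp h
      rcases ha₁ ψ this.1 with h' | h'
      · exact absurd h' (by simpa using this.2)
      · exact h'
  · intro ψ hψ
    rcases List.mem_append.mp hψ with h | h
    · exact hb₁ ψ h
    · have := List.mem_filter.mp h
      rcases hb₂ ψ this.1 with h' | h'
      · exact absurd h' (by simpa using this.2)
      · exact h'
  · refine mem_L_of_valid₂ L htaut hmp a₁ b₁ a₂ b₂ _ _ hL1 hL2 ?_
    intro v H1 H2 H3
    have hC : ∀ ψ ∈ a₂, v ψ := fun ψ h => H3 ψ (List.mem_append_left _ h)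
    rcases H2 hC with ⟨ψ, hψ, hvψ⟩ | hB
    · by_cases hψφ : ψ = φ
      · have hvφ : v φ := hψφ ▸ hvψ
        have hA : ∀ χ ∈ a₁, v χ := by
          intro χ hχ
          by_cases hχφ : χ = φ
          · exact hχφ ▸ hvφ
          · exact H3 χ (List.mem_append_right _ (List.mem_filter.mpr ⟨hχ, by simpa using hχφ⟩))
        rcases H1 hA with ⟨χ, hχ, hvχ⟩ | hB
        · exact Or.inl ⟨χ, List.mem_append_left _ hχ, hvχ⟩
        · exact Or.inr hB
      · exact Or.inl ⟨ψ, List.mem_append_right _ (List.mem_filter.mpr ⟨hψ, by simpa using hψφ⟩), hvψ⟩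
    · exact Or.inr hB

open Classical in
/-- The extension sequence. -/
noncomputable def seqP (L Γ Δ : Set Fm) (e : ℕ → Fm) : ℕ → Set Fm × Set Fm
  | 0 => (Γ, Δ)
  | n + 1 =>
    let GD := seqP L Γ Δ e n
    if Deriv L (insert (e n) GD.1) GD.2 then (GD.1, insert (e n) GD.2)
    else (insert (e n) GD.1, GD.2)

theorem seqP_mono (L Γ Δ : Set Fm) (e : ℕ → Fm) {m n : ℕ} (h : m ≤ n) :
    (seqP L Γ Δ e m).1 ⊆ (seqP L Γ Δ e n).1 ∧ (seqP L Γ Δ e m).2 ⊆ (seqP L Γ Δ e n).2 := by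
  induction n with
  | zero => obtain rfl : m = 0 := Nat.le_zero.mp h; exact ⟨le_refl _, le_refl _⟩
  | succ n ih =>
    rcases Nat.le_succ_iff_eq_or_le.mp h with rfl | h'
    · exact ⟨le_refl _, le_refl _⟩
    · refine ⟨(ih h').1.trans ?_, (ih h').2.trans ?_⟩ <;>
      · simp only [seqP]
        split <;> simp [Set.subset_insert]

theorem seqP_not_deriv (L Γ Δ : Set Fm) (e : ℕ → Fm)
    (htaut : ∀ (p : PFm) (σ : ℕ → Fm), (∀ f : ℕ → Prop, peval f p) → psubst σ p ∈ L)
    (hmp : ∀ φ ψ : Fm, φ ∈ L → Fm.imp φ ψ ∈ L → ψ ∈ L)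
    (h : ¬ Deriv L Γ Δ) :
    ∀ n, ¬ Deriv L (seqP L Γ Δ e n).1 (seqP L Γ Δ e n).2 := by
  intro n
  induction n with
  | zero => exact h
  | succ n ih =>
    simp only [seqP]
    split
    next hc => intro hd; exact ih (cut L htaut hmp hc hd)
    next hc => exact hc

theorem seqP_cover (L Γ Δ : Set Fm) (e : ℕ → Fm) (n : ℕ) :
    e n ∈ (seqP L Γ Δ e (n + 1)).1 ∨ e n ∈ (seqP L Γ Δ e (n + 1)).2 := by
  simp only [seqP]
  split
  · exact Or.inr (Set.mem_insert _ _)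
  · exact Or.inl (Set.mem_insert _ _)

theorem list_stage {S : ℕ → Set Fm} (hmono : ∀ {m n : ℕ}, m ≤ n → S m ⊆ S n) (l : List Fm)
    (h : ∀ ψ ∈ l, ψ ∈ ⋃ k, S k) : ∃ N, ∀ ψ ∈ l, ψ ∈ S N := by
  induction l with
  | nil => exact ⟨0, by simp⟩
  | cons ψ l ih =>
    obtain ⟨N, hN⟩ := ih (fun χ hχ => h χ (by simp [hχ]))
    obtain ⟨M, hM⟩ := Set.mem_iUnion.mp (h ψ (by simp))
    refine ⟨max N M, ?_⟩
    intro χ hχ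
    rcases List.mem_cons.mp hχ with rfl | hχ
    · exact hmono (le_max_right N M) hM
    · exact hmono (le_max_left N M) (hN χ hχ)

theorem top_imp_of_mem (L : Set Fm)
    (htaut : ∀ (p : PFm) (σ : ℕ → Fm), (∀ f : ℕ → Prop, peval f p) → psubst σ p ∈ L)
    (hmp : ∀ φ ψ : Fm, φ ∈ L → Fm.imp φ ψ ∈ L → ψ ∈ L)
    (φ : Fm) (h : φ ∈ L) : Fm.imp (conjL []) (disjL [φ]) ∈ L := by
  have hp := htaut (.imp (.var 0) (.imp (.imp (.var 1) (.var 1)) (.or (.var 0) (.var 2))))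
    (fun n => if n = 0 then φ else if n = 1 then Fm.var 0 else FBot)
    (fun f => by simp only [peval]; tauto)
  simp only [psubst, if_pos, if_neg, reduceIte] at hp
  exact hmp _ _ h hp

theorem single_imp_of_imp (L : Set Fm)
    (htaut : ∀ (p : PFm) (σ : ℕ → Fm), (∀ f : ℕ → Prop, peval f p) → psubst σ p ∈ L)
    (hmp : ∀ φ ψ : Fm, φ ∈ L → Fm.imp φ ψ ∈ L → ψ ∈ L)
    (φ ψ : Fm) (h : Fm.imp φ ψ ∈ L) : Fm.imp (conjL [φ]) (disjL [ψ]) ∈ L := by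
  have hp := htaut (.imp (.imp (.var 0) (.var 1))
      (.imp (.and (.var 0) (.imp (.var 2) (.var 2))) (.or (.var 1) (.var 3))))
    (fun n => if n = 0 then φ else if n = 1 then ψ else if n = 2 then Fm.var 0 else FBot)
    (fun f => by simp only [peval]; tauto)
  simp only [psubst, reduceIte] at hp
  exact hmp _ _ h hp

theorem or_split (L : Set Fm)
    (htaut : ∀ (p : PFm) (σ : ℕ → Fm), (∀ f : ℕ → Prop, peval f p) → psubst σ p ∈ L)
    (φ ψ : Fm) : Fm.imp (conjL [Fm.or φ ψ]) (disjL [φ, ψ]) ∈ L := by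
  have hp := htaut (.imp (.and (.or (.var 0) (.var 1)) (.imp (.var 2) (.var 2)))
      (.or (.var 0) (.or (.var 1) (.var 3))))
    (fun n => if n = 0 then φ else if n = 1 then ψ else if n = 2 then Fm.var 0 else FBot)
    (fun f => by simp only [peval]; tauto)
  simp only [psubst, reduceIte] at hp
  exact hp

end PairExtAux

/-- the Pair Extension Theorem. -/
theorem pair_extension (L : Set Fm)
    (htaut : ∀ (p : PFm) (σ : ℕ → Fm), (∀ f : ℕ → Prop, peval f p) → psubst σ p ∈ L)
    (hmp : ∀ φ ψ : Fm, φ ∈ L → Fm.imp φ ψ ∈ L → ψ ∈ L)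
    (Γ Δ : Set Fm) (h : ¬ Deriv L Γ Δ) :
    ∃ T : Set Fm,
      Γ ⊆ T ∧
      T ∩ Δ = ∅ ∧
      L ⊆ T ∧
      (∀ φ ψ : Fm, Fm.imp φ ψ ∈ L → φ ∈ T → ψ ∈ T) ∧
      (∀ φ ψ : Fm, Fm.or φ ψ ∈ T → φ ∈ T ∨ ψ ∈ T) ∧
      T ≠ Set.univ := by
  classical
  obtain ⟨e, he⟩ := exists_surjective_nat Fm
  set S := PairExtAux.seqP L Γ Δ e with hS
  have hmono1 : ∀ {m n : ℕ}, m ≤ n → (S m).1 ⊆ (S n).1 :=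
    fun h' => (PairExtAux.seqP_mono L Γ Δ e h').1
  have hmono2 : ∀ {m n : ℕ}, m ≤ n → (S m).2 ⊆ (S n).2 :=
    fun h' => (PairExtAux.seqP_mono L Γ Δ e h').2
  set T := ⋃ n, (S n).1 with hT
  set Dinf := ⋃ n, (S n).2 with hD
  have hnd : ¬ Deriv L T Dinf := by
    rintro ⟨l₁, l₂, h1, h2, hL⟩
    obtain ⟨N₁, hN₁⟩ := PairExtAux.list_stage (S := fun n => (S n).1) (fun h' => hmono1 h') l₁ h1
    obtain ⟨N₂, hN₂⟩ := PairExtAux.list_stage (S := fun n => (S n).2) (fun h' => hmono2 h') l₂ h2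
    exact PairExtAux.seqP_not_deriv L Γ Δ e htaut hmp h (max N₁ N₂)
      ⟨l₁, l₂, fun ψ hψ => hmono1 (le_max_left _ _) (hN₁ ψ hψ),
        fun ψ hψ => hmono2 (le_max_right _ _) (hN₂ ψ hψ), hL⟩
  have hTsub : ∀ n, (S n).1 ⊆ T := fun n => Set.subset_iUnion (fun k => (S k).1) n
  have hDsub : ∀ n, (S n).2 ⊆ Dinf := fun n => Set.subset_iUnion (fun k => (S k).2) n
  have hcompl : ∀ φ : Fm, φ ∈ T ∨ φ ∈ Dinf := by
    intro φ
    obtain ⟨n, rfl⟩ := he φ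
    rcases PairExtAux.seqP_cover L Γ Δ e n with h' | h'
    · exact Or.inl (hTsub (n + 1) h')
    · exact Or.inr (hDsub (n + 1) h')
  refine ⟨T, ?_, ?_, ?_, ?_, ?_, ?_⟩
  · exact hTsub 0
  · apply Set.eq_empty_iff_forall_notMem.mpr
    rintro ψ ⟨hψT, hψΔ⟩
    exact hnd ⟨[ψ], [ψ], by simpa using hψT, by simpa using hDsub 0 hψΔ,
      PairExtAux.mem_L_of_valid₀ L htaut [ψ] [ψ]
        (fun v hv => Or.inl ⟨ψ, by simp, hv ψ (by simp)⟩)⟩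
  · intro φ hφ
    rcases hcompl φ with h' | h'
    · exact h'
    · exact absurd
        ⟨[], [φ], by simp, by simpa using h', PairExtAux.top_imp_of_mem L htaut hmp φ hφ⟩ hnd
  · intro φ ψ himp hφ
    rcases hcompl ψ with h' | h'
    · exact h'
    · exact absurd ⟨[φ], [ψ], by simpa using hφ, by simpa using h',
        PairExtAux.single_imp_of_imp L htaut hmp φ ψ himp⟩ hnd
  · intro φ ψ hor
    by_contra hcon
    push_neg at hcon
    have hφ : φ ∈ Dinf := (hcompl φ).resolve_left hcon.1
    have hψ : ψ ∈ Dinf := (hcompl ψ).resolve_left hcon.2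
    refine hnd ⟨[Fm.or φ ψ], [φ, ψ], by simpa using hor, ?_, PairExtAux.or_split L htaut φ ψ⟩
    intro χ hχ
    rcases List.mem_cons.mp hχ with rfl | hχ
    · exact hφ
    · rcases List.mem_cons.mp hχ with rfl | hχ
      · exact hψ
      · simp at hχ
  · intro hTuniv
    have hbot : FBot ∈ T := hTuniv ▸ Set.mem_univ FBot
    exact hnd ⟨[FBot], [], by simpa using hbot, by simp,
      PairExtAux.mem_L_of_valid₀ L htaut [FBot] [] (fun v hv => Or.inr (hv FBot (by simp)))⟩
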